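/- arXiv:1506.05345 — 3 statements merged into one kernel-verified Lean document; each statement's English description precedes it below -/
import Mathlib

section
/- Let G be the group with a semidirect product structure G = G' ⋊ Z, where G' = (F_2 × Z/2) ⋊ V as above (generators x, y, w, a, b) and Z = ⟨g⟩ acts by g x g^{-1} = y^{-1}, g y g^{-1} = y·x·b, g w g^{-1} = w, g a g^{-1} = b, g b g^{-1} = a·b. Then the assignment g ↦ g, x ↦ y^{-1}·a, y ↦ y·x·w, a ↦ b, b ↦ a·b, w ↦ w extends to a group automorphism φ of G. -/
namespace EyralOkaG

open FreeGroup

/-- Generators of `G = ((F₂ × ℤ/2) ⋊ V) ⋊ ℤ`: `g = 0`, `x = 1`, `y = 2`, `w = 3`,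
`a = 4`, `b = 5`. -/
def Gg : FreeGroup (Fin 6) := of 0
def X : FreeGroup (Fin 6) := of 1
def Y : FreeGroup (Fin 6) := of 2
def W : FreeGroup (Fin 6) := of 3
def A : FreeGroup (Fin 6) := of 4
def B : FreeGroup (Fin 6) := of 5

/-- Defining relations of `G = G' ⋊ ℤ`, where `G' = (F₂ × ℤ/2) ⋊ V` is generated by
`x, y, w, a, b` as before and the generator `g` of `ℤ` acts by `g x g⁻¹ = y⁻¹`,
`g y g⁻¹ = y·x·b`, `g w g⁻¹ = w`, `g a g⁻¹ = b`, `g b g⁻¹ = a·b`. -/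
def GRels : Set (FreeGroup (Fin 6)) :=
  { W * W, X * W * X⁻¹ * W⁻¹, Y * W * Y⁻¹ * W⁻¹,
    A * A, B * B, A * B * A⁻¹ * B⁻¹,
    A * X * A⁻¹ * X⁻¹, A * Y * A⁻¹ * (Y * W)⁻¹, A * W * A⁻¹ * W⁻¹,
    B * X * B⁻¹ * (X * W)⁻¹, B * Y * B⁻¹ * Y⁻¹, B * W * B⁻¹ * W⁻¹,
    Gg * X * Gg⁻¹ * (Y⁻¹)⁻¹, Gg * Y * Gg⁻¹ * (Y * X * B)⁻¹, Gg * W * Gg⁻¹ * W⁻¹,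
    Gg * A * Gg⁻¹ * B⁻¹, Gg * B * Gg⁻¹ * (A * B)⁻¹ }

/-- The fundamental group `G` of the affine Eyral-Oka curve complement, via its explicit
semidirect product presentation. -/
def G : Type := PresentedGroup GRels

instance : Group G := by unfold G; infer_instance

def g : G := PresentedGroup.of 0
def x : G := PresentedGroup.of 1
def y : G := PresentedGroup.of 2
def w : G := PresentedGroup.of 3
def a : G := PresentedGroup.of 4
def b : G := PresentedGroup.of 5

end EyralOkaG

/-!
The inverse of `φ` is `ψ : g ↦ g, x ↦ x·a·b·y·w, y ↦ a·b·x⁻¹, w ↦ w, a ↦ a·b, b ↦ a`.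
That `φ` and `ψ` respect the defining relations, and that `ψ ∘ φ` and `φ ∘ ψ` fix the
generators, is checked by reducing words in `G` to the normal form `u · wᵉ · aᵈ · bᶠ · gⁿ`
(`u` in the free group on `x, y`) afforded by the semidirect product structure.
-/

section Group

variable {H : Type*} [Group H] {p q r : H}

theorem mul_mul_eq_of_conj_eq (h : p * q * p⁻¹ = r) (t : H) : p * (q * t) = r * (p * t) := by
  rw [← h]; group

theorem mul_inv_mul_eq_of_conj_eq (h : p * q * p⁻¹ = r) (t : H) :
    p * (q⁻¹ * t) = r⁻¹ * (p * t) := by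
  rw [← h]; group

theorem mul_mul_cancel_of_mul_self (h : p * p = 1) (t : H) : p * (p * t) = t := by
  rw [← mul_assoc, h, one_mul]

theorem eq_of_forall_mul_eq (h : ∀ t : H, p * t = q * t) : p = q := by
  simpa using h 1

end Group

namespace EyralOkaG

open PresentedGroup

theorem relator_eq_one (r : FreeGroup (Fin 6))
    (hr : r ∈ GRels := by simp only [GRels, Set.mem_insert_iff, Set.mem_singleton_iff]; tauto) :
    (mk GRels r : G) = 1 :=
  one_of_mem hr

theorem w_mul_w : w * w = 1 := relator_eq_one (W * W)
theorem a_mul_a : a * a = 1 := relator_eq_one (A * A)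
theorem b_mul_b : b * b = 1 := relator_eq_one (B * B)

theorem commute_x_w : Commute x w :=
  commutatorElement_eq_one_iff_commute.mp (relator_eq_one (X * W * X⁻¹ * W⁻¹))
theorem commute_y_w : Commute y w :=
  commutatorElement_eq_one_iff_commute.mp (relator_eq_one (Y * W * Y⁻¹ * W⁻¹))
theorem commute_a_b : Commute a b :=
  commutatorElement_eq_one_iff_commute.mp (relator_eq_one (A * B * A⁻¹ * B⁻¹))

theorem a_mul_x_mul_a_inv : a * x * a⁻¹ = x :=
  mul_inv_eq_one.mp (relator_eq_one (A * X * A⁻¹ * X⁻¹))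
theorem a_mul_y_mul_a_inv : a * y * a⁻¹ = y * w :=
  mul_inv_eq_one.mp (relator_eq_one (A * Y * A⁻¹ * (Y * W)⁻¹))
theorem a_mul_w_mul_a_inv : a * w * a⁻¹ = w :=
  mul_inv_eq_one.mp (relator_eq_one (A * W * A⁻¹ * W⁻¹))
theorem b_mul_x_mul_b_inv : b * x * b⁻¹ = x * w :=
  mul_inv_eq_one.mp (relator_eq_one (B * X * B⁻¹ * (X * W)⁻¹))
theorem b_mul_y_mul_b_inv : b * y * b⁻¹ = y :=
  mul_inv_eq_one.mp (relator_eq_one (B * Y * B⁻¹ * Y⁻¹))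
theorem b_mul_w_mul_b_inv : b * w * b⁻¹ = w :=
  mul_inv_eq_one.mp (relator_eq_one (B * W * B⁻¹ * W⁻¹))
theorem g_mul_x_mul_g_inv : g * x * g⁻¹ = y⁻¹ :=
  mul_inv_eq_one.mp (relator_eq_one (Gg * X * Gg⁻¹ * (Y⁻¹)⁻¹))
theorem g_mul_y_mul_g_inv : g * y * g⁻¹ = y * x * b :=
  mul_inv_eq_one.mp (relator_eq_one (Gg * Y * Gg⁻¹ * (Y * X * B)⁻¹))
theorem g_mul_w_mul_g_inv : g * w * g⁻¹ = w :=
  mul_inv_eq_one.mp (relator_eq_one (Gg * W * Gg⁻¹ * W⁻¹))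
theorem g_mul_a_mul_g_inv : g * a * g⁻¹ = b :=
  mul_inv_eq_one.mp (relator_eq_one (Gg * A * Gg⁻¹ * B⁻¹))
theorem g_mul_b_mul_g_inv : g * b * g⁻¹ = a * b :=
  mul_inv_eq_one.mp (relator_eq_one (Gg * B * Gg⁻¹ * (A * B)⁻¹))

/- A terminating rewriting system pushing `w`, `a`, `b`, `g` to the right. The rules carry a
tail `t` so that `simp [mul_assoc]` applies them anywhere in a right-associated word; an
identity `u = v` is then proved as `∀ t, u * t = v * t`. -/

@[simp] theorem w_inv : w⁻¹ = w := inv_eq_of_mul_eq_one_right w_mul_w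
@[simp] theorem a_inv : a⁻¹ = a := inv_eq_of_mul_eq_one_right a_mul_a
@[simp] theorem b_inv : b⁻¹ = b := inv_eq_of_mul_eq_one_right b_mul_b
@[simp] theorem w_mul_w_mul : ∀ t : G, w * (w * t) = t := mul_mul_cancel_of_mul_self w_mul_w
@[simp] theorem a_mul_a_mul : ∀ t : G, a * (a * t) = t := mul_mul_cancel_of_mul_self a_mul_a
@[simp] theorem b_mul_b_mul : ∀ t : G, b * (b * t) = t := mul_mul_cancel_of_mul_self b_mul_b

@[simp] theorem w_mul_x_mul : ∀ t : G, w * (x * t) = x * (w * t) := commute_x_w.symm.left_comm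
@[simp] theorem w_mul_x_inv_mul : ∀ t : G, w * (x⁻¹ * t) = x⁻¹ * (w * t) :=
  commute_x_w.inv_left.symm.left_comm
@[simp] theorem w_mul_y_mul : ∀ t : G, w * (y * t) = y * (w * t) := commute_y_w.symm.left_comm
@[simp] theorem w_mul_y_inv_mul : ∀ t : G, w * (y⁻¹ * t) = y⁻¹ * (w * t) :=
  commute_y_w.inv_left.symm.left_comm

@[simp] theorem a_mul_x_mul : ∀ t : G, a * (x * t) = x * (a * t) :=
  mul_mul_eq_of_conj_eq a_mul_x_mul_a_inv
@[simp] theorem a_mul_x_inv_mul : ∀ t : G, a * (x⁻¹ * t) = x⁻¹ * (a * t) :=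
  mul_inv_mul_eq_of_conj_eq a_mul_x_mul_a_inv
@[simp] theorem a_mul_y_mul : ∀ t : G, a * (y * t) = y * w * (a * t) :=
  mul_mul_eq_of_conj_eq a_mul_y_mul_a_inv
@[simp] theorem a_mul_y_inv_mul : ∀ t : G, a * (y⁻¹ * t) = (y * w)⁻¹ * (a * t) :=
  mul_inv_mul_eq_of_conj_eq a_mul_y_mul_a_inv
@[simp] theorem a_mul_w_mul : ∀ t : G, a * (w * t) = w * (a * t) :=
  mul_mul_eq_of_conj_eq a_mul_w_mul_a_inv

@[simp] theorem b_mul_x_mul : ∀ t : G, b * (x * t) = x * w * (b * t) :=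
  mul_mul_eq_of_conj_eq b_mul_x_mul_b_inv
@[simp] theorem b_mul_x_inv_mul : ∀ t : G, b * (x⁻¹ * t) = (x * w)⁻¹ * (b * t) :=
  mul_inv_mul_eq_of_conj_eq b_mul_x_mul_b_inv
@[simp] theorem b_mul_y_mul : ∀ t : G, b * (y * t) = y * (b * t) :=
  mul_mul_eq_of_conj_eq b_mul_y_mul_b_inv
@[simp] theorem b_mul_y_inv_mul : ∀ t : G, b * (y⁻¹ * t) = y⁻¹ * (b * t) :=
  mul_inv_mul_eq_of_conj_eq b_mul_y_mul_b_inv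
@[simp] theorem b_mul_w_mul : ∀ t : G, b * (w * t) = w * (b * t) :=
  mul_mul_eq_of_conj_eq b_mul_w_mul_b_inv
@[simp] theorem b_mul_a_mul : ∀ t : G, b * (a * t) = a * (b * t) := commute_a_b.symm.left_comm

@[simp] theorem g_mul_x_mul : ∀ t : G, g * (x * t) = y⁻¹ * (g * t) :=
  mul_mul_eq_of_conj_eq g_mul_x_mul_g_inv
@[simp] theorem g_mul_x_inv_mul : ∀ t : G, g * (x⁻¹ * t) = y⁻¹⁻¹ * (g * t) :=
  mul_inv_mul_eq_of_conj_eq g_mul_x_mul_g_inv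
@[simp] theorem g_mul_y_mul : ∀ t : G, g * (y * t) = y * x * b * (g * t) :=
  mul_mul_eq_of_conj_eq g_mul_y_mul_g_inv
@[simp] theorem g_mul_y_inv_mul : ∀ t : G, g * (y⁻¹ * t) = (y * x * b)⁻¹ * (g * t) :=
  mul_inv_mul_eq_of_conj_eq g_mul_y_mul_g_inv
@[simp] theorem g_mul_w_mul : ∀ t : G, g * (w * t) = w * (g * t) :=
  mul_mul_eq_of_conj_eq g_mul_w_mul_g_inv
@[simp] theorem g_mul_a_mul : ∀ t : G, g * (a * t) = b * (g * t) :=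
  mul_mul_eq_of_conj_eq g_mul_a_mul_g_inv
@[simp] theorem g_mul_b_mul : ∀ t : G, g * (b * t) = a * b * (g * t) :=
  mul_mul_eq_of_conj_eq g_mul_b_mul_g_inv

theorem hom_ext {M : Type*} [Group M] {f f' : G →* M} (hg : f g = f' g) (hx : f x = f' x)
    (hy : f y = f' y) (hw : f w = f' w) (ha : f a = f' a) (hb : f b = f' b) : f = f' :=
  PresentedGroup.ext fun i : Fin 6 => by fin_cases i <;> assumption

section lift

variable {M : Type*} [Group M] (f : Fin 6 → M) (hf : ∀ r ∈ GRels, FreeGroup.lift f r = 1)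

def lift : G →* M := toGroup hf

@[simp] theorem lift_g : lift f hf g = f 0 := toGroup.of hf
@[simp] theorem lift_x : lift f hf x = f 1 := toGroup.of hf
@[simp] theorem lift_y : lift f hf y = f 2 := toGroup.of hf
@[simp] theorem lift_w : lift f hf w = f 3 := toGroup.of hf
@[simp] theorem lift_a : lift f hf a = f 4 := toGroup.of hf
@[simp] theorem lift_b : lift f hf b = f 5 := toGroup.of hf

end lift

def phiGen : Fin 6 → G := ![g, y⁻¹ * a, y * x * w, w, b, a * b]

def phiInvGen : Fin 6 → G := ![g, x * a * b * y * w, a * b * x⁻¹, w, a * b, a]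

theorem phiGen_rels : ∀ r ∈ GRels, FreeGroup.lift phiGen r = 1 := by
  simp only [GRels, Set.forall_mem_insert, Set.mem_singleton_iff, forall_eq]
  and_intros <;> refine eq_of_forall_mul_eq fun t => ?_ <;>
    simp [phiGen, Gg, X, Y, W, A, B, mul_assoc]

theorem phiInvGen_rels : ∀ r ∈ GRels, FreeGroup.lift phiInvGen r = 1 := by
  simp only [GRels, Set.forall_mem_insert, Set.mem_singleton_iff, forall_eq]
  and_intros <;> refine eq_of_forall_mul_eq fun t => ?_ <;>
    simp [phiInvGen, Gg, X, Y, W, A, B, mul_assoc]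

/-- The assignment `g ↦ g`, `x ↦ y⁻¹·a`, `y ↦ y·x·w`, `a ↦ b`, `b ↦ a·b`, `w ↦ w`
extends to a group automorphism of `G`. -/
theorem exists_automorphism :
    ∃ φ : G ≃* G,
      φ g = g ∧ φ x = y⁻¹ * a ∧ φ y = y * x * w ∧ φ a = b ∧ φ b = a * b ∧ φ w = w := by
  let φ := lift phiGen phiGen_rels
  let ψ := lift phiInvGen phiInvGen_rels
  have hψφ : ψ.comp φ = .id G := by
    apply hom_ext <;> refine eq_of_forall_mul_eq fun t => ?_ <;>
      simp [φ, ψ, phiGen, phiInvGen, mul_assoc]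
  have hφψ : φ.comp ψ = .id G := by
    apply hom_ext <;> refine eq_of_forall_mul_eq fun t => ?_ <;>
      simp [φ, ψ, phiGen, phiInvGen, mul_assoc]
  exact ⟨φ.toMulEquiv ψ hψφ hφψ, lift_g _ phiGen_rels, lift_x _ phiGen_rels,
    lift_y _ phiGen_rels, lift_a _ phiGen_rels, lift_b _ phiGen_rels, lift_w _ phiGen_rels⟩

end EyralOkaG
end

section
/- The image F of the homomorphism B_4 → GL(3, Z/4) sending σ1, σ2, σ3 to the matrices M1 = [[1,0,0],[1,1,0],[1,0,1]], M2 = [[2,3,0],[1,0,0],[0,0,1]], M3 = [[1,0,0],[0,2,3],[0,1,0]] is a finite group of order 768. -/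
/-- The braid relations on `n` Artin generators. -/
def braidRels (n : ℕ) : Set (FreeGroup (Fin n)) :=
  { r | (∃ i j : Fin n, (i : ℕ) + 1 = j ∧
          r = FreeGroup.of i * FreeGroup.of j * FreeGroup.of i *
              (FreeGroup.of j * FreeGroup.of i * FreeGroup.of j)⁻¹) ∨
        (∃ i j : Fin n, (i : ℕ) + 2 ≤ j ∧
          r = FreeGroup.of i * FreeGroup.of j * (FreeGroup.of j * FreeGroup.of i)⁻¹) }

/-- The Artin braid group `B₄` on four strands. -/
def BraidGroup4 : Type := PresentedGroup (braidRels 3)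

instance : Group BraidGroup4 := by unfold BraidGroup4; infer_instance

def σ₁ : BraidGroup4 := PresentedGroup.of 0
def σ₂ : BraidGroup4 := PresentedGroup.of 1
def σ₃ : BraidGroup4 := PresentedGroup.of 2

/-- The reduced Burau matrices at `t = -1` over `ℤ/4`. -/
def M1 : Matrix (Fin 3) (Fin 3) (ZMod 4) := !![1,0,0; 1,1,0; 1,0,1]
def M2 : Matrix (Fin 3) (Fin 3) (ZMod 4) := !![2,3,0; 1,0,0; 0,0,1]
def M3 : Matrix (Fin 3) (Fin 3) (ZMod 4) := !![1,0,0; 0,2,3; 0,1,0]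

/-!
The image is the subgroup generated by `M1, M2, M3`. A finite set containing `1` and closed under
right multiplication by each generator `g` contains that subgroup: right multiplication by `g`
permutes the set, so `g⁻¹` preserves it as well. Encoding matrices over `ℤ/4` as base-4 numerals,
so that the kernel computes with them quickly, a search from the identity finds 768 distinct codes
of products of generators, closed under right multiplication by the generators; these are
therefore exactly the codes of the elements of the image.
-/

open Function

theorem Subgroup.closure_subset_of_mul_mem {G : Type*} [Group G] {s T : Set G} (hT : T.Finite)
    (h1 : 1 ∈ T) (hmul : ∀ t ∈ T, ∀ g ∈ s, t * g ∈ T) : (closure s : Set G) ⊆ T := by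
  have hmul_inv : ∀ t ∈ T, ∀ g ∈ s, t * g⁻¹ ∈ T := by
    intro t ht g hg
    have hbij : Set.BijOn (· * g) T T :=
      (hT.injOn_iff_bijOn_of_mapsTo fun t ht => hmul t ht g hg).1 (mul_left_injective g).injOn
    obtain ⟨u, hu, rfl⟩ := hbij.surjOn ht
    simpa using hu
  intro x hx
  induction hx using closure_induction_right with
  | one => exact h1
  | mul_right x _ g hg ih => exact hmul x ih g hg
  | mul_inv_cancel x _ g hg ih => exact hmul_inv x ih g hg

theorem Subgroup.card_closure_eq_length {G : Type*} [Group G] [Finite G] {s : Set G}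
    {c : G → ℕ} (hc : Injective c) {l : List ℕ} (hl : l.Nodup) (h1 : c 1 ∈ l)
    (hmul : ∀ x, c x ∈ l → ∀ g ∈ s, c (x * g) ∈ l)
    (hreal : ∀ n ∈ l, ∃ x ∈ closure s, c x = n) :
    Nat.card (closure s) = l.length := by
  have himage : c '' (closure s : Set G) = {n | n ∈ l} := by
    refine Set.Subset.antisymm ?_ fun n hn => hreal n hn
    rintro _ ⟨x, hx, rfl⟩
    exact closure_subset_of_mul_mem (T := c ⁻¹' {n | n ∈ l}) (Set.toFinite _) h1
      (fun t ht g hg => hmul t ht g hg) hx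
  rw [← SetLike.coe_sort_coe, ← Nat.card_image_of_injective hc, himage,
    ← List.toFinset_card_of_nodup hl, ← Nat.card_eq_finsetCard]
  simp

def bitsetOf (l : List ℕ) : ℕ := l.foldr (fun n S => S ||| 1 <<< n) 0

theorem testBit_bitsetOf {l : List ℕ} {n : ℕ} : (bitsetOf l).testBit n = true ↔ n ∈ l := by
  induction l with
  | nil => simp [bitsetOf]
  | cons a l ih =>
    simp only [bitsetOf, List.foldr_cons] at ih ⊢
    rw [Nat.testBit_or, Bool.or_eq_true, ih, Nat.one_shiftLeft, Nat.testBit_two_pow,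
      decide_eq_true_iff, List.mem_cons, eq_comm, or_comm]

def nodupAvoiding : List ℕ → ℕ → Bool
  | [], _ => true
  | a :: l, S => !S.testBit a && nodupAvoiding l (S ||| 1 <<< a)

theorem nodup_of_nodupAvoiding {l : List ℕ} {S : ℕ} (h : nodupAvoiding l S = true) :
    l.Nodup ∧ ∀ n ∈ l, S.testBit n = false := by
  induction l generalizing S with
  | nil => simp
  | cons a l ih =>
    simp only [nodupAvoiding, Bool.and_eq_true, Bool.not_eq_true'] at h
    obtain ⟨hl, hS⟩ := ih h.2
    simp only [Nat.testBit_or, Nat.one_shiftLeft, Nat.testBit_two_pow, Bool.or_eq_false_iff,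
      decide_eq_false_iff_not] at hS
    refine ⟨List.nodup_cons.2 ⟨fun ha => (hS a ha).2 rfl, hl⟩, ?_⟩
    simp only [List.mem_cons, forall_eq_or_imp]
    exact ⟨h.1, fun n hn => (hS n hn).1⟩

def isClosedUnder (fs : List (ℕ → ℕ)) (l : List ℕ) : Bool :=
  l.all fun n => fs.all fun f => (bitsetOf l).testBit (f n)

theorem mem_of_isClosedUnder {fs : List (ℕ → ℕ)} {l : List ℕ}
    (h : isClosedUnder fs l = true) {n : ℕ} (hn : n ∈ l) {f : ℕ → ℕ} (hf : f ∈ fs) :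
    f n ∈ l := by
  simp only [isClosedUnder, List.all_eq_true] at h
  exact testBit_bitsetOf.1 (h n hn f hf)

/-- Only the soundness of this search is proved (`forall_mem_orbitSearch`); completeness and the
absence of duplicates are checked on its output. -/
def orbitSearch (fs : List (ℕ → ℕ)) : ℕ → ℕ → List ℕ → List ℕ → List ℕ
  | 0, _, found, _ => found
  | _ + 1, _, found, [] => found
  | fuel + 1, seen, found, a :: todo =>
    if seen.testBit a then orbitSearch fs fuel seen found todo
    else orbitSearch fs fuel (seen ||| 1 <<< a) (a :: found) (fs.map (· a) ++ todo)

theorem forall_mem_orbitSearch {fs : List (ℕ → ℕ)} {P : ℕ → Prop}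
    (hP : ∀ f ∈ fs, ∀ n, P n → P (f n)) (fuel seen : ℕ) (found todo : List ℕ)
    (hfound : ∀ n ∈ found, P n) (htodo : ∀ n ∈ todo, P n) :
    ∀ n ∈ orbitSearch fs fuel seen found todo, P n := by
  induction fuel generalizing seen found todo with
  | zero => exact hfound
  | succ fuel ih =>
    cases todo with
    | nil => exact hfound
    | cons a todo =>
      simp only [List.forall_mem_cons] at htodo
      unfold orbitSearch
      split
      · exact ih _ _ _ hfound htodo.2
      · refine ih _ _ _ (List.forall_mem_cons.2 ⟨htodo.1, hfound⟩) ?_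
        simp only [List.mem_append, List.mem_map]
        rintro _ (⟨f, hf, rfl⟩ | hn)
        exacts [hP f hf a htodo.1, htodo.2 _ hn]

namespace MatrixCode

def code (A : Matrix (Fin 3) (Fin 3) (ZMod 4)) : ℕ :=
  ∑ i : Fin 3, ∑ j : Fin 3, (A i j).val * 4 ^ (3 * i.val + j.val)

def digit (n p : ℕ) : ℕ := n / 4 ^ p % 4

theorem digit_code (A : Matrix (Fin 3) (Fin 3) (ZMod 4)) (i j : Fin 3) :
    digit (code A) (3 * i + j) = (A i j).val := by
  have hlt : ∀ i j, (A i j).val < 4 := fun i j => ZMod.val_lt (A i j)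
  have := hlt 0 0; have := hlt 0 1; have := hlt 0 2
  have := hlt 1 0; have := hlt 1 1; have := hlt 1 2
  have := hlt 2 0; have := hlt 2 1; have := hlt 2 2
  simp only [code, digit, Fin.sum_univ_three]
  fin_cases i <;> fin_cases j <;> simp <;> omega

theorem code_injective : Injective code := fun A B h => by
  ext i j
  exact ZMod.val_injective 4 (by rw [← digit_code, h, digit_code])

def mulCode (a b : ℕ) : ℕ :=
  ∑ i : Fin 3, ∑ j : Fin 3,
    (∑ k : Fin 3, digit a (3 * i + k) * digit b (3 * k + j)) % 4 * 4 ^ (3 * i.val + j.val)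

theorem code_mul (A B : Matrix (Fin 3) (Fin 3) (ZMod 4)) :
    code (A * B) = mulCode (code A) (code B) := by
  simp only [mulCode, digit_code]
  simp only [code, Matrix.mul_apply]
  congr! 4 with i _ j _
  rw [← ZMod.val_natCast, Nat.cast_sum]
  simp

end MatrixCode

theorem BraidGroup4.closure_σ_eq_top :
    Subgroup.closure ({σ₁, σ₂, σ₃} : Set BraidGroup4) = ⊤ := by
  refine eq_top_iff.2 ((PresentedGroup.closure_range_of (braidRels 3)).symm.le.trans ?_)
  refine Subgroup.closure_mono (Set.range_subset_iff.2 fun i => ?_)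
  fin_cases i
  exacts [Or.inl rfl, Or.inr (Or.inl rfl), Or.inr (Or.inr rfl)]

namespace BurauMod4

open MatrixCode

def generators : List (Matrix (Fin 3) (Fin 3) (ZMod 4)) := [M1, M2, M3]

def image : Subgroup (GL (Fin 3) (ZMod 4)) :=
  Subgroup.closure {g : GL (Fin 3) (ZMod 4) | (g : Matrix (Fin 3) (Fin 3) (ZMod 4)) ∈ generators}

theorem isUnit_of_mem_generators {M : Matrix (Fin 3) (Fin 3) (ZMod 4)} (hM : M ∈ generators) :
    IsUnit M := by
  rw [Matrix.isUnit_iff_isUnit_det]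
  simp only [generators, List.mem_cons, List.not_mem_nil, or_false] at hM
  rcases hM with rfl | rfl | rfl <;> decide

def orbitCodes : List ℕ :=
  orbitSearch (generators.map fun M n => mulCode n (code M)) 10000 0 [] [code 1]

theorem orbitCodes_spec : orbitCodes.length = 768 ∧ nodupAvoiding orbitCodes 0 = true ∧
    code 1 ∈ orbitCodes ∧
    isClosedUnder (generators.map fun M n => mulCode n (code M)) orbitCodes = true := by
  decide +kernel

theorem card_image : Nat.card image = 768 := by
  obtain ⟨hlen, hnodup, hone, hclosed⟩ := orbitCodes_spec
  rw [← hlen]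
  refine Subgroup.card_closure_eq_length (c := fun g => code g.val)
    (fun _ _ h => Units.ext (code_injective h)) (nodup_of_nodupAvoiding hnodup).1 hone ?_ ?_
  · intro x hx g hg
    rw [Units.val_mul, code_mul]
    exact mem_of_isClosedUnder hclosed hx (List.mem_map_of_mem hg)
  · refine forall_mem_orbitSearch ?_ _ _ _ _ (by simp) ?_
    · simp only [List.mem_map]
      rintro _ ⟨M, hM, rfl⟩ _ ⟨x, hx, rfl⟩
      obtain ⟨g, rfl⟩ := isUnit_of_mem_generators hM
      exact ⟨x * g, mul_mem hx (Subgroup.subset_closure hM), by rw [Units.val_mul, code_mul]⟩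
    · simpa using ⟨1, Subgroup.one_mem _, rfl⟩

theorem range_eq_image (φ : BraidGroup4 →* GL (Fin 3) (ZMod 4))
    (h1 : (φ σ₁ : Matrix (Fin 3) (Fin 3) (ZMod 4)) = M1)
    (h2 : (φ σ₂ : Matrix (Fin 3) (Fin 3) (ZMod 4)) = M2)
    (h3 : (φ σ₃ : Matrix (Fin 3) (Fin 3) (ZMod 4)) = M3) :
    φ.range = image := by
  have hgens : φ '' {σ₁, σ₂, σ₃} =
      {g : GL (Fin 3) (ZMod 4) | (g : Matrix (Fin 3) (Fin 3) (ZMod 4)) ∈ generators} := by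
    ext g
    simp [generators, Units.ext_iff, h1, h2, h3, eq_comm]
  rw [image, ← hgens, ← φ.map_closure, BraidGroup4.closure_σ_eq_top, φ.range_eq_map]

end BurauMod4

/-- The image `F` of the homomorphism `B₄ → GL(3, ℤ/4)` sending `σ₁, σ₂, σ₃` to
`M1, M2, M3` is a finite group of order `768`. -/
theorem burau_mod4_image_card (φ : BraidGroup4 →* GL (Fin 3) (ZMod 4))
    (h1 : (↑(φ σ₁) : Matrix (Fin 3) (Fin 3) (ZMod 4)) = M1)
    (h2 : (↑(φ σ₂) : Matrix (Fin 3) (Fin 3) (ZMod 4)) = M2)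
    (h3 : (↑(φ σ₃) : Matrix (Fin 3) (Fin 3) (ZMod 4)) = M3) :
    Nat.card φ.range = 768 := by
  rw [BurauMod4.range_eq_image φ h1 h2 h3, BurauMod4.card_image]
end

section
/- For the groups G_± = G/⟨⟨z⟩⟩ and G/⟨⟨z·w⟩⟩ (quotients of G by the normal closures of z and z·w respectively), the automorphism φ of G with φ(z) = z·w induces an isomorphism G/⟨⟨z⟩⟩ ≅ G/⟨⟨z·w⟩⟩. -/
namespace EyralOkaG

open FreeGroup

/-- The central element `z = g⁻⁶·[y,x]`. -/
def z : G := g ^ (-6 : ℤ) * (y * x * y⁻¹ * x⁻¹)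

/-- Any automorphism `φ` of `G` with `φ(z) = z·w` induces an isomorphism
`G/⟪z⟫ ≅ G/⟪z·w⟫` between the quotients of `G` by the normal closures of `z` and `z·w`. -/
theorem quotients_isomorphic (φ : G ≃* G) (hz : φ z = z * w) :
    Nonempty ((G ⧸ Subgroup.normalClosure {z}) ≃* (G ⧸ Subgroup.normalClosure {z * w})) := by
  have hmap : (Subgroup.normalClosure {z}).map φ.toMonoidHom
      = Subgroup.normalClosure {z * w} := by
    rw [Subgroup.map_normalClosure _ _ φ.surjective]
    congr 1
    simp [Set.image_singleton, hz]
  haveI := Subgroup.normalClosure_normal (s := ({z} : Set G))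
  haveI := Subgroup.normalClosure_normal (s := ({z * w} : Set G))
  exact ⟨QuotientGroup.congr _ _ φ hmap⟩

end EyralOkaG
end
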